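/- Let 0 < p ≤ 1/2 and let (F₁, F₂) be a cross-intersecting pair of families of subsets of [N], meaning every A ∈ F₁ and B ∈ F₂ satisfy A ∩ B ≠ ∅. Then μ_p(F₁)·μ_p(F₂) ≤ p². -/

import Mathlib

/-!
Fourier analysis on the `p`-biased cube, `q = 1 - p`. The characters
`χ_S(A) = ∏_{i ∈ S} (1_A(i) - p)` are orthogonal for `μ_p`, with `‖χ_S‖² = (pq)^|S|`. The kernel
`∏_i (1 - χ_i(A) χ_i(B) / q²) = Σ_S (-q⁻²)^|S| χ_S(A) χ_S(B)` vanishes as soon as `A ∩ B ≠ ∅`, so for a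
cross-intersecting pair `μ(F₁) μ(F₂) = -Σ_{S ≠ ∅} (-q⁻²)^|S| f̂₁(S) f̂₂(S)`. As
`q⁻²ˢ ≤ (p/q) (pq)⁻ˢ` for `s ≥ 1` when `p ≤ q`, Cauchy–Schwarz and Parseval give
`q μ(F₁) μ(F₂) ≤ p √(μ(F₁)(1 - μ(F₁)) μ(F₂)(1 - μ(F₂)))`, and AM–GM turns this into
`μ(F₁) μ(F₂) ≤ p²`.
-/

/-- The `p`-biased measure of a family `F` of subsets of `[N]`:
`μ_p(F) = Σ_{X ∈ F} p^{|X|} (1-p)^{N-|X|}`. -/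
noncomputable def biasedMeasure (N : ℕ) (p : ℝ) (F : Finset (Finset (Fin N))) : ℝ :=
  ∑ X ∈ F, p ^ X.card * (1 - p) ^ (N - X.card)

open Finset

lemma mul_le_sq_of_sq_mul_le {p q a b : ℝ} (hp : 0 ≤ p) (hq : 0 ≤ q) (hpq : p + q = 1)
    (ha : 0 ≤ a) (hb : 0 ≤ b) (ha1 : 0 ≤ a - a ^ 2) (hb1 : 0 ≤ b - b ^ 2)
    (h : (q * (a * b)) ^ 2 ≤ p ^ 2 * ((a - a ^ 2) * (b - b ^ 2))) :
    a * b ≤ p ^ 2 := by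
  obtain hab | hab := (mul_nonneg ha hb).eq_or_lt
  · rw [← hab]; positivity
  set s := √(a * b)
  have hs : s ^ 2 = a * b := Real.sq_sqrt hab.le
  have hs0 : 0 ≤ s := Real.sqrt_nonneg _
  have hamgm : 2 * s ≤ a + b := by
    rw [show s = √a * √b from Real.sqrt_mul ha b]
    nlinarith [sq_nonneg (√a - √b), Real.sq_sqrt ha, Real.sq_sqrt hb]
  have hs1 : s ≤ 1 := by nlinarith
  have h' : (q * s) ^ 2 ≤ (p * (1 - s)) ^ 2 := by
    have : q ^ 2 * (a * b) ≤ p ^ 2 * ((1 - a) * (1 - b)) :=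
      le_of_mul_le_mul_right (by linear_combination h) hab
    nlinarith
  have : q * s ≤ p * (1 - s) :=
    (pow_le_pow_iff_left₀ (by positivity) (by nlinarith) two_ne_zero).mp h'
  rw [← hs]
  exact pow_le_pow_left₀ hs0 (by nlinarith) 2

lemma mul_inv_sq_pow_le_mul_inv_mul_pow {p q : ℝ} (hp : 0 < p) (hpq : p ≤ q) {n : ℕ}
    (hn : n ≠ 0) : q * (q ^ 2)⁻¹ ^ n ≤ p * (p * q)⁻¹ ^ n := by
  have hq : 0 < q := hp.trans_le hpq
  have key : p * (p * q)⁻¹ ^ n = p * (q / p) ^ n * (q ^ 2)⁻¹ ^ n := by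
    rw [mul_assoc, ← mul_pow]
    congr 2
    field_simp
  rw [key]
  gcongr
  calc q = p * (q / p) := by field_simp
    _ ≤ p * (q / p) ^ n := by gcongr; exact le_self_pow₀ ((one_le_div hp).mpr hpq) hn

namespace BiasedFourier

variable {α : Type*} [Fintype α] [DecidableEq α] (p : ℝ)

noncomputable def biasedWeight (A : Finset α) : ℝ := ∏ i, if i ∈ A then p else 1 - p

noncomputable def coordChar (A : Finset α) (i : α) : ℝ := (if i ∈ A then 1 else 0) - p

noncomputable def biasedChar (S A : Finset α) : ℝ := ∏ i ∈ S, coordChar p A i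

noncomputable def fourierCoeff (F : Finset (Finset α)) (S : Finset α) : ℝ :=
  ∑ A ∈ F, biasedWeight p A * biasedChar p S A

lemma biasedWeight_eq (A : Finset α) :
    biasedWeight p A = p ^ #A * (1 - p) ^ (Fintype.card α - #A) := by
  rw [biasedWeight, prod_ite, prod_const, prod_const]
  simp [filter_not, card_sdiff]

lemma biasedMeasure_eq_sum_biasedWeight {N : ℕ} (F : Finset (Finset (Fin N))) :
    biasedMeasure N p F = ∑ A ∈ F, biasedWeight p A := by
  simp only [biasedMeasure, biasedWeight_eq, Fintype.card_fin]

lemma sum_biasedWeight_nonneg {p : ℝ} (hp : 0 ≤ p) (hq : 0 ≤ 1 - p) (F : Finset (Finset α)) :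
    0 ≤ ∑ A ∈ F, biasedWeight p A :=
  sum_nonneg fun _ _ => prod_nonneg fun i _ => by split_ifs <;> assumption

lemma fourierCoeff_empty (F : Finset (Finset α)) :
    fourierCoeff p F ∅ = ∑ A ∈ F, biasedWeight p A := by
  simp [fourierCoeff, biasedChar]

lemma prod_one_add_mul_coordChar (t : ℝ) (A B : Finset α) :
    ∏ i, (1 + t * (coordChar p A i * coordChar p B i)) =
      ∑ S, t ^ #S * (biasedChar p S A * biasedChar p S B) := by
  rw [prod_one_add, powerset_univ]
  refine sum_congr rfl fun S _ => ?_
  rw [prod_mul_distrib, prod_const, biasedChar, biasedChar, prod_mul_distrib]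

lemma sum_pow_mul_fourierCoeff_mul (t : ℝ) (F G : Finset (Finset α)) :
    ∑ S, t ^ #S * (fourierCoeff p F S * fourierCoeff p G S) =
      ∑ A ∈ F, ∑ B ∈ G, biasedWeight p A * biasedWeight p B *
        ∏ i, (1 + t * (coordChar p A i * coordChar p B i)) := by
  simp_rw [prod_one_add_mul_coordChar, mul_sum, fourierCoeff, sum_mul_sum, mul_sum]
  rw [sum_comm]
  refine sum_congr rfl fun A _ => ?_
  rw [sum_comm]
  refine sum_congr rfl fun B _ => sum_congr rfl fun S _ => by ring

variable {p}

/- The `i`-th factor of the Parseval kernel is `1/p`, `1/(1-p)` or `0` according as `i` lies in both,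
neither or exactly one of `A` and `B`. -/
lemma biasedWeight_mul_prod_one_add_inv_mul_coordChar_sq (hp : 0 < p) (hp1 : p < 1)
    (A : Finset α) :
    biasedWeight p A * ∏ i, (1 + (p * (1 - p))⁻¹ * (coordChar p A i * coordChar p A i)) = 1 := by
  have hq : 1 - p ≠ 0 := by linarith
  rw [biasedWeight, ← prod_mul_distrib]
  refine prod_eq_one fun i _ => ?_
  by_cases hi : i ∈ A <;> simp only [coordChar, hi, if_true, if_false] <;> field_simp <;> ring

lemma prod_one_add_inv_mul_coordChar_eq_zero_of_ne (hp : 0 < p) (hp1 : p < 1)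
    {A B : Finset α} (hAB : A ≠ B) :
    ∏ i, (1 + (p * (1 - p))⁻¹ * (coordChar p A i * coordChar p B i)) = 0 := by
  have hq : 1 - p ≠ 0 := by linarith
  obtain ⟨i, hi⟩ : ∃ i, ¬(i ∈ A ↔ i ∈ B) := by
    by_contra! h
    exact hAB (ext h)
  refine prod_eq_zero (mem_univ i) ?_
  by_cases hA : i ∈ A <;> by_cases hB : i ∈ B <;> simp_all [coordChar] <;> field_simp <;> ring

theorem sum_inv_pow_mul_fourierCoeff_sq (hp : 0 < p) (hp1 : p < 1) (F : Finset (Finset α)) :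
    ∑ S, (p * (1 - p))⁻¹ ^ #S * fourierCoeff p F S ^ 2 = ∑ A ∈ F, biasedWeight p A := by
  simp_rw [sq, sum_pow_mul_fourierCoeff_mul]
  refine sum_congr rfl fun A hA => ?_
  rw [sum_eq_single_of_mem A hA fun B _ hBA =>
    by rw [prod_one_add_inv_mul_coordChar_eq_zero_of_ne hp hp1 hBA.symm, mul_zero],
    mul_assoc, biasedWeight_mul_prod_one_add_inv_mul_coordChar_sq hp hp1, mul_one]

theorem sum_erase_empty_inv_pow_mul_fourierCoeff_sq (hp : 0 < p) (hp1 : p < 1)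
    (F : Finset (Finset α)) :
    ∑ S ∈ univ.erase ∅, (p * (1 - p))⁻¹ ^ #S * fourierCoeff p F S ^ 2 =
      ∑ A ∈ F, biasedWeight p A - (∑ A ∈ F, biasedWeight p A) ^ 2 := by
  have h := sum_inv_pow_mul_fourierCoeff_sq hp hp1 F
  rw [← add_sum_erase _ _ (mem_univ ∅), fourierCoeff_empty, card_empty, pow_zero,
    one_mul] at h
  linarith

lemma sum_biasedWeight_sub_sq_nonneg (hp : 0 < p) (hp1 : p < 1) (F : Finset (Finset α)) :
    0 ≤ ∑ A ∈ F, biasedWeight p A - (∑ A ∈ F, biasedWeight p A) ^ 2 := by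
  have : 0 < 1 - p := sub_pos.mpr hp1
  rw [← sum_erase_empty_inv_pow_mul_fourierCoeff_sq hp hp1]
  exact sum_nonneg fun S _ => by positivity

lemma prod_one_sub_inv_sq_mul_coordChar_eq_zero (hq : 1 - p ≠ 0) {A B : Finset α}
    (hAB : (A ∩ B).Nonempty) :
    ∏ i, (1 + -((1 - p) ^ 2)⁻¹ * (coordChar p A i * coordChar p B i)) = 0 := by
  obtain ⟨i, hi⟩ := hAB
  rw [mem_inter] at hi
  refine prod_eq_zero (mem_univ i) ?_
  simp only [coordChar, hi.1, hi.2, if_true]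
  field_simp
  ring

theorem sum_pow_mul_fourierCoeff_mul_eq_zero_of_cross (hq : 1 - p ≠ 0) {F G : Finset (Finset α)}
    (hFG : ∀ A ∈ F, ∀ B ∈ G, (A ∩ B).Nonempty) :
    ∑ S, (-((1 - p) ^ 2)⁻¹) ^ #S * (fourierCoeff p F S * fourierCoeff p G S) = 0 := by
  rw [sum_pow_mul_fourierCoeff_mul]
  exact sum_eq_zero fun A hA => sum_eq_zero fun B hB => by
    rw [prod_one_sub_inv_sq_mul_coordChar_eq_zero hq (hFG A hA B hB), mul_zero]

theorem mul_sum_le_mul_sum_abs_fourierCoeff_mul (hp : 0 < p) (hpq : p ≤ 1 - p)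
    {F G : Finset (Finset α)} (hFG : ∀ A ∈ F, ∀ B ∈ G, (A ∩ B).Nonempty) :
    (1 - p) * ((∑ A ∈ F, biasedWeight p A) * ∑ B ∈ G, biasedWeight p B) ≤
      p * ∑ S ∈ univ.erase ∅, (p * (1 - p))⁻¹ ^ #S * |fourierCoeff p F S * fourierCoeff p G S| := by
  have hq : 0 < 1 - p := hp.trans_le hpq
  have h0 := sum_pow_mul_fourierCoeff_mul_eq_zero_of_cross (p := p) hq.ne' hFG
  rw [← add_sum_erase _ _ (mem_univ ∅)] at h0
  simp only [card_empty, pow_zero, one_mul, fourierCoeff_empty] at h0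
  rw [eq_neg_of_add_eq_zero_left h0, mul_neg, mul_sum, ← sum_neg_distrib, mul_sum]
  refine sum_le_sum fun S hS => ?_
  have hS : #S ≠ 0 := card_ne_zero.mpr (nonempty_iff_ne_empty.mpr (ne_of_mem_erase hS))
  calc -((1 - p) * ((-((1 - p) ^ 2)⁻¹) ^ #S * (fourierCoeff p F S * fourierCoeff p G S)))
      ≤ (1 - p) * ((1 - p) ^ 2)⁻¹ ^ #S * |fourierCoeff p F S * fourierCoeff p G S| := by
        refine (neg_le_abs _).trans_eq ?_
        simp only [abs_mul, abs_pow, abs_neg, abs_inv, abs_of_pos hq, mul_assoc]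
    _ ≤ p * (p * (1 - p))⁻¹ ^ #S * |fourierCoeff p F S * fourierCoeff p G S| :=
        mul_le_mul_of_nonneg_right (mul_inv_sq_pow_le_mul_inv_mul_pow hp hpq hS) (abs_nonneg _)
    _ = _ := mul_assoc _ _ _

theorem sq_sum_abs_fourierCoeff_mul_le (hp : 0 < p) (hp1 : p < 1) (F G : Finset (Finset α)) :
    (∑ S ∈ univ.erase ∅, (p * (1 - p))⁻¹ ^ #S * |fourierCoeff p F S * fourierCoeff p G S|) ^ 2 ≤
      (∑ A ∈ F, biasedWeight p A - (∑ A ∈ F, biasedWeight p A) ^ 2) *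
        (∑ B ∈ G, biasedWeight p B - (∑ B ∈ G, biasedWeight p B) ^ 2) := by
  have hw : ∀ S : Finset α, 0 ≤ (p * (1 - p))⁻¹ ^ #S := fun S => by
    have : 0 < 1 - p := sub_pos.mpr hp1
    positivity
  rw [← sum_erase_empty_inv_pow_mul_fourierCoeff_sq hp hp1,
    ← sum_erase_empty_inv_pow_mul_fourierCoeff_sq hp hp1]
  refine sum_sq_le_sum_mul_sum_of_sq_le_mul _ (fun S _ => mul_nonneg (hw S) (sq_nonneg _))
    (fun S _ => mul_nonneg (hw S) (sq_nonneg _)) fun S _ => le_of_eq ?_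
  rw [mul_pow, sq_abs]
  ring

end BiasedFourier

open BiasedFourier in
/-- If `0 < p ≤ 1/2` and `(F₁, F₂)` is a cross-intersecting pair of families of subsets of
`[N]`, then `μ_p(F₁) · μ_p(F₂) ≤ p²`. -/
theorem biasedMeasure_cross_intersecting {N : ℕ} (p : ℝ) (hp : 0 < p) (hp2 : p ≤ 1 / 2)
    (F₁ F₂ : Finset (Finset (Fin N)))
    (hcross : ∀ A ∈ F₁, ∀ B ∈ F₂, (A ∩ B).Nonempty) :
    biasedMeasure N p F₁ * biasedMeasure N p F₂ ≤ p ^ 2 := by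
  have hq : 0 < 1 - p := by linarith
  have hp1 : p < 1 := by linarith
  have hbound := mul_sum_le_mul_sum_abs_fourierCoeff_mul hp (by linarith) hcross
  have hCS := sq_sum_abs_fourierCoeff_mul_le hp hp1 F₁ F₂
  rw [biasedMeasure_eq_sum_biasedWeight, biasedMeasure_eq_sum_biasedWeight]
  set a := ∑ A ∈ F₁, biasedWeight p A
  set b := ∑ B ∈ F₂, biasedWeight p B
  set X := ∑ S ∈ univ.erase ∅, (p * (1 - p))⁻¹ ^ #S * |fourierCoeff p F₁ S * fourierCoeff p F₂ S|
  have ha : 0 ≤ a := sum_biasedWeight_nonneg hp.le hq.le F₁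
  have hb : 0 ≤ b := sum_biasedWeight_nonneg hp.le hq.le F₂
  refine mul_le_sq_of_sq_mul_le hp.le hq.le (by ring) ha hb
    (sum_biasedWeight_sub_sq_nonneg hp hp1 F₁) (sum_biasedWeight_sub_sq_nonneg hp hp1 F₂) ?_
  calc ((1 - p) * (a * b)) ^ 2 ≤ (p * X) ^ 2 := pow_le_pow_left₀ (by positivity) hbound 2
    _ = p ^ 2 * X ^ 2 := mul_pow _ _ _
    _ ≤ p ^ 2 * ((a - a ^ 2) * (b - b ^ 2)) := by gcongr
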